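/- For a skew-associative binary algebra (V,μ), with δ¹f(x1,x2) = f(μ(x1,x2)) − μ(f(x1),x2) − μ(x1,f(x2)) and δ²φ(x1,x2,x3) = μ(φ(x1,x2),x3) + μ(x1,φ(x2,x3)) + φ(μ(x1,x2),x3) + φ(x1,μ(x2,x3)), one has δ² ∘ δ¹ = 0. -/
import Mathlib


/-- The 1-coboundary operator of a skew-associative binary algebra. -/
def sDelta1 {K V : Type*} [Field K] [AddCommGroup V] [Module K V]
    (μ : V →ₗ[K] V →ₗ[K] V) (f : V →ₗ[K] V) (x1 x2 : V) : V :=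
  f (μ x1 x2) - μ (f x1) x2 - μ x1 (f x2)

/-- The 2-coboundary operator of a skew-associative binary algebra. -/
def sDelta2 {K V : Type*} [Field K] [AddCommGroup V] [Module K V]
    (μ : V →ₗ[K] V →ₗ[K] V) (φ : V → V → V) (x1 x2 x3 : V) : V :=
  μ (φ x1 x2) x3 + μ x1 (φ x2 x3) + φ (μ x1 x2) x3 + φ x1 (μ x2 x3)

theorem stmt17 {K V : Type*} [Field K] [AddCommGroup V] [Module K V]
    (μ : V →ₗ[K] V →ₗ[K] V)
    (hskew : ∀ x1 x2 x3 : V, μ (μ x1 x2) x3 = - μ x1 (μ x2 x3))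
    (f : V →ₗ[K] V) :
    ∀ x1 x2 x3 : V, sDelta2 μ (sDelta1 μ f) x1 x2 x3 = 0 := by
  intro x1 x2 x3
  simp only [sDelta2, sDelta1, map_sub, map_add, LinearMap.sub_apply, LinearMap.add_apply,
    map_neg, LinearMap.neg_apply, hskew]
  abel
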